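/- For λ' > λ > 0, equality holds in the transportation inequality for Poisson measures: h_λ(W₁(P(λ'), P(λ))) = H(P(λ') | P(λ)), where h_λ(r) = λ((1 + r/λ)log(1 + r/λ) - r/λ). -/

import Mathlib

open MeasureTheory ProbabilityTheory Real
open scoped ENNReal NNReal

/-- The L¹-Wasserstein distance (for the Euclidean metric) between two measures on `ℕ`. -/
noncomputable def W1Nat (μ ν : Measure ℕ) : ℝ≥0∞ :=
  ⨅ (cpl : Measure (ℕ × ℕ)) (_ : IsProbabilityMeasure cpl)
    (_ : cpl.map Prod.fst = μ) (_ : cpl.map Prod.snd = ν),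
    ∫⁻ p, ENNReal.ofReal |(p.1 : ℝ) - (p.2 : ℝ)| ∂cpl

/-- `h_λ(r) = λ((1 + r/λ)log(1 + r/λ) - r/λ)`. -/
noncomputable def hDev (c r : ℝ) : ℝ := c * ((1 + r / c) * log (1 + r / c) - r / c)

/-!
Writing `P(λ') = P(λ' - λ) ∗ P(λ)`, the coupling `(X + Y, Y)` of independent `X ~ P(λ' - λ)`,
`Y ~ P(λ)` moves mass by `X`, whose mean is `λ' - λ`; conversely every coupling moves mass by at
least the difference `λ' - λ` of the means, so `W₁(P(λ'), P(λ)) = λ' - λ`. The log-likelihood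
ratio of `P(λ')` to `P(λ)` at `n` is `λ - λ' + n log(λ'/λ)`, so the relative entropy is
`λ' log(λ'/λ) + λ - λ' = λ klFun(λ'/λ)`, which is also `h_λ(λ' - λ)`.
-/

open scoped Nat
open InformationTheory

section Poisson

variable (r : ℝ≥0)

lemma hasSum_mean_poissonMeasure : HasSum (fun n : ℕ => exp (-r) * r ^ n / n ! * n) r := by
  have shift (n : ℕ) : exp (-r) * r ^ (n + 1) / (n + 1)! * ((n + 1 : ℕ) : ℝ)
      = r * (exp (-r) * r ^ n / n !) := by
    rw [Nat.factorial_succ]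
    push_cast
    field_simp
    ring
  refine (hasSum_nat_add_iff' 1).mp ?_
  simpa only [shift, Finset.sum_range_one, Nat.cast_zero, mul_zero, sub_zero, mul_one] using
    (hasSum_one_poissonMeasure r).mul_left (r : ℝ)

lemma lintegral_natCast_poissonMeasure : ∫⁻ n, (n : ℝ≥0∞) ∂poissonMeasure r = r := by
  have h := hasSum_mean_poissonMeasure r
  calc ∫⁻ n, (n : ℝ≥0∞) ∂poissonMeasure r
      = ∑' n : ℕ, ENNReal.ofReal (exp (-r) * r ^ n / n ! * n) := by
        simp only [poissonMeasure, lintegral_sum_measure, lintegral_smul_measure, lintegral_dirac,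
          smul_eq_mul]
        congr with n
        rw [ENNReal.ofReal_mul (by positivity), ENNReal.ofReal_natCast]
    _ = r := by
        rw [← ENNReal.ofReal_tsum_of_nonneg (fun n => by positivity) h.summable, h.tsum_eq,
          ENNReal.ofReal_coe_nnreal]

end Poisson

section W1Nat

lemma W1Nat_le_lintegral {μ ν : Measure ℕ} (γ : Measure (ℕ × ℕ)) [IsProbabilityMeasure γ]
    (hγ₁ : γ.map Prod.fst = μ) (hγ₂ : γ.map Prod.snd = ν) :
    W1Nat μ ν ≤ ∫⁻ p, ENNReal.ofReal |(p.1 : ℝ) - (p.2 : ℝ)| ∂γ :=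
  iInf_le_of_le γ <| iInf_le_of_le ‹_› <| iInf_le_of_le hγ₁ <| iInf_le _ hγ₂

lemma natCast_le_ofReal_abs_sub_add (m n : ℕ) :
    (m : ℝ≥0∞) ≤ ENNReal.ofReal |(m : ℝ) - n| + n := by
  rw [← ENNReal.ofReal_natCast n, ← ENNReal.ofReal_add (abs_nonneg _) n.cast_nonneg,
    ← ENNReal.ofReal_natCast m]
  exact ENNReal.ofReal_le_ofReal (by linarith [le_abs_self ((m : ℝ) - n)])

lemma lintegral_natCast_sub_le_W1Nat (μ ν : Measure ℕ) :
    ∫⁻ n, (n : ℝ≥0∞) ∂μ - ∫⁻ n, (n : ℝ≥0∞) ∂ν ≤ W1Nat μ ν := by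
  refine le_iInf fun γ => le_iInf fun _ => le_iInf fun hγ₁ => le_iInf fun hγ₂ => ?_
  rw [tsub_le_iff_right, ← hγ₁, ← hγ₂, lintegral_map .of_discrete measurable_fst,
    lintegral_map .of_discrete measurable_snd, ← lintegral_add_left .of_discrete]
  exact lintegral_mono fun p => natCast_le_ofReal_abs_sub_add p.1 p.2

lemma W1Nat_conv_le (μ ν : Measure ℕ) [IsProbabilityMeasure μ] [IsProbabilityMeasure ν] :
    W1Nat (μ ∗ ν) ν ≤ ∫⁻ n, (n : ℝ≥0∞) ∂μ := by
  set f : ℕ × ℕ → ℕ × ℕ := fun q => (q.1 + q.2, q.2)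
  have hf : Measurable f := .of_discrete
  have : IsProbabilityMeasure ((μ.prod ν).map f) := Measure.isProbabilityMeasure_map hf.aemeasurable
  calc W1Nat (μ ∗ ν) ν
      ≤ ∫⁻ p, ENNReal.ofReal |(p.1 : ℝ) - (p.2 : ℝ)| ∂(μ.prod ν).map f := by
        refine W1Nat_le_lintegral _ ?_ ?_
        · rw [Measure.map_map measurable_fst hf]; rfl
        · rw [Measure.map_map measurable_snd hf]
          simp [Function.comp_def, f]
    _ = ∫⁻ q, (q.1 : ℝ≥0∞) ∂μ.prod ν := by
        rw [lintegral_map .of_discrete hf]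
        congr with q
        simp [f]
    _ = ∫⁻ n, (n : ℝ≥0∞) ∂μ := by
        rw [← lintegral_map (f := fun n : ℕ => (n : ℝ≥0∞)) .of_discrete measurable_fst,
          Measure.map_fst_prod, measure_univ, one_smul]

end W1Nat

lemma W1Nat_poissonMeasure {lam lam' : ℝ≥0} (hle : lam ≤ lam') :
    W1Nat (poissonMeasure lam') (poissonMeasure lam) = ((lam' - lam : ℝ≥0) : ℝ≥0∞) := by
  refine le_antisymm ?_ ?_
  · calc W1Nat (poissonMeasure lam') (poissonMeasure lam)
        = W1Nat (poissonMeasure (lam' - lam) ∗ poissonMeasure lam) (poissonMeasure lam) := by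
          rw [poissonMeasure_conv_poissonMeasure, tsub_add_cancel_of_le hle]
      _ ≤ _ := (W1Nat_conv_le _ _).trans_eq (lintegral_natCast_poissonMeasure _)
  · simpa [lintegral_natCast_poissonMeasure, ENNReal.coe_sub] using
      lintegral_natCast_sub_le_W1Nat (poissonMeasure lam') (poissonMeasure lam)

lemma hDev_eq_mul_klFun (c r : ℝ) : hDev c r = c * klFun (1 + r / c) := by
  rw [hDev, klFun_apply]
  ring

lemma log_div_poisson_weights {a b : ℝ} (ha : 0 < a) (hb : 0 < b) (n : ℕ) :
    log ((exp (-a) * a ^ n / n !) / (exp (-b) * b ^ n / n !)) = b - a + n * log (a / b) := by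
  have hfac : (n ! : ℝ) ≠ 0 := by positivity
  rw [show (exp (-a) * a ^ n / n !) / (exp (-b) * b ^ n / n !) = exp (b - a) * (a / b) ^ n by
      rw [div_pow, exp_sub, exp_neg, exp_neg]; field_simp,
    log_mul (exp_ne_zero _) (by positivity), log_exp, log_pow]

lemma hasSum_poisson_relEntropy {a b : ℝ≥0} (ha : 0 < a) (hb : 0 < b) :
    HasSum (fun n : ℕ => (exp (-(a : ℝ)) * (a : ℝ) ^ n / n !) *
        log ((exp (-(a : ℝ)) * (a : ℝ) ^ n / n !) / (exp (-(b : ℝ)) * (b : ℝ) ^ n / n !)))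
      (b * klFun (a / b)) := by
  have hmix : (b : ℝ) * klFun (a / b) = 1 * (b - a) + a * log (a / b) := by
    rw [klFun_apply]
    field_simp
    ring
  rw [hmix]
  refine (((hasSum_one_poissonMeasure a).mul_right ((b : ℝ) - a)).add
    ((hasSum_mean_poissonMeasure a).mul_right (log (a / b)))).congr_fun fun n => ?_
  rw [log_div_poisson_weights (NNReal.coe_pos.2 ha) (NNReal.coe_pos.2 hb)]
  ring

/-- For `λ' > λ > 0`, equality holds in the transportation inequality for Poisson measures:
`h_λ(W₁(P(λ'), P(λ))) = H(P(λ') | P(λ))`, where the relative entropy is given by its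
explicit series. -/
theorem poisson_transport_equality (lam lam' : ℝ≥0) (h0 : 0 < lam) (hlt : lam < lam') :
    hDev (lam : ℝ) (W1Nat (poissonMeasure lam') (poissonMeasure lam)).toReal
      = ∑' n : ℕ, (exp (-(lam' : ℝ)) * (lam' : ℝ) ^ n / n.factorial) *
          log ((exp (-(lam' : ℝ)) * (lam' : ℝ) ^ n / n.factorial) /
            (exp (-(lam : ℝ)) * (lam : ℝ) ^ n / n.factorial)) := by
  have hW : (W1Nat (poissonMeasure lam') (poissonMeasure lam)).toReal = lam' - lam := by
    rw [W1Nat_poissonMeasure hlt.le, ENNReal.coe_toReal, NNReal.coe_sub hlt.le]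
  have hratio : 1 + ((lam' : ℝ) - lam) / lam = lam' / lam := by
    field_simp [(NNReal.coe_pos.2 h0).ne']
    ring
  rw [hW, hDev_eq_mul_klFun, hratio, (hasSum_poisson_relEntropy (h0.trans hlt) h0).tsum_eq]
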